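/- arXiv:1204.0930 — 2 statements merged into one kernel-verified Lean document; each statement's English description precedes it below -/
import Mathlib

section
/- Let g = z + 3x²y + 3xy³ + y⁵ in ℚ[x,y,z] and let h = y − 6(x+y²)²·g + 8(x+y²)·g³ − (16/5)·g⁵. Then the total degree of h equals 25. -/
/-! The upper bound is a weight count: `y`, `x + y²` and `g` have degree at most `1`, `2`
and `5`, so every summand of `h` has degree at most `25`. For the lower bound, specialising
`x = z = 0`, `y = t` sends `g` to `t⁵` and `h` to `t - 6t⁹ + 8t¹⁷ - (16/5)t²⁵`, of degree
`25`, and substituting polynomials of degree at most `1` cannot raise the degree. -/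

open MvPolynomial

namespace MvPolynomial

variable {σ R : Type*}

section CommSemiring

variable [CommSemiring R] {p q : MvPolynomial σ R} {m n : ℕ}

theorem totalDegree_ofNat (k : ℕ) [k.AtLeastTwo] :
    (ofNat(k) : MvPolynomial σ R).totalDegree = 0 := by
  rw [← map_ofNat C k]
  exact totalDegree_C _

theorem totalDegree_add_le_of_le (hp : p.totalDegree ≤ n) (hq : q.totalDegree ≤ n) :
    (p + q).totalDegree ≤ n :=
  (totalDegree_add p q).trans (max_le hp hq)

theorem totalDegree_mul_le_of_le (hp : p.totalDegree ≤ m) (hq : q.totalDegree ≤ n) :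
    (p * q).totalDegree ≤ m + n :=
  (totalDegree_mul p q).trans (add_le_add hp hq)

theorem totalDegree_pow_le_of_le (k : ℕ) (hp : p.totalDegree ≤ n) :
    (p ^ k).totalDegree ≤ k * n :=
  (totalDegree_pow p k).trans (Nat.mul_le_mul_left k hp)

theorem natDegree_aeval_le_totalDegree (p : MvPolynomial σ R) (f : σ → Polynomial R)
    (hf : ∀ i, (f i).natDegree ≤ 1) : (aeval f p).natDegree ≤ p.totalDegree := by
  simpa using aeval_natDegree_le p le_rfl f hf

end CommSemiring

theorem totalDegree_sub_le_of_le [CommRing R] {p q : MvPolynomial σ R} {n : ℕ}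
    (hp : p.totalDegree ≤ n) (hq : q.totalDegree ≤ n) : (p - q).totalDegree ≤ n :=
  (totalDegree_sub p q).trans (max_le hp hq)

end MvPolynomial

theorem totalDegree_kuroda_g_le {σ R : Type*} [CommSemiring R] {x y z : MvPolynomial σ R}
    (hx : x.totalDegree ≤ 1) (hy : y.totalDegree ≤ 1) (hz : z.totalDegree ≤ 1) :
    (z + 3 * x ^ 2 * y + 3 * x * y ^ 3 + y ^ 5).totalDegree ≤ 5 := by
  refine totalDegree_add_le_of_le (totalDegree_add_le_of_le (totalDegree_add_le_of_le ?_ ?_) ?_) ?_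
  · exact hz.trans (by norm_num)
  · exact (totalDegree_mul_le_of_le (totalDegree_mul_le_of_le (totalDegree_ofNat 3).le
      (totalDegree_pow_le_of_le 2 hx)) hy).trans (by norm_num)
  · exact (totalDegree_mul_le_of_le (totalDegree_mul_le_of_le (totalDegree_ofNat 3).le hx)
      (totalDegree_pow_le_of_le 3 hy)).trans (by norm_num)
  · exact (totalDegree_pow_le_of_le 5 hy).trans (by norm_num)

theorem totalDegree_kuroda_h_le {σ R : Type*} [CommRing R] {y s g : MvPolynomial σ R} (c : R)
    (hy : y.totalDegree ≤ 1) (hs : s.totalDegree ≤ 2) (hg : g.totalDegree ≤ 5) :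
    (y - 6 * s ^ 2 * g + 8 * s * g ^ 3 - C c * g ^ 5).totalDegree ≤ 25 := by
  refine totalDegree_sub_le_of_le (totalDegree_add_le_of_le (totalDegree_sub_le_of_le ?_ ?_) ?_) ?_
  · exact hy.trans (by norm_num)
  · exact (totalDegree_mul_le_of_le (totalDegree_mul_le_of_le (totalDegree_ofNat 6).le
      (totalDegree_pow_le_of_le 2 hs)) hg).trans (by norm_num)
  · exact (totalDegree_mul_le_of_le (totalDegree_mul_le_of_le (totalDegree_ofNat 8).le hs)
      (totalDegree_pow_le_of_le 3 hg)).trans (by norm_num)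
  · exact (totalDegree_mul_le_of_le (totalDegree_C c).le
      (totalDegree_pow_le_of_le 5 hg)).trans (by norm_num)

theorem h_totalDegree_eq_25
    (g h : MvPolynomial (Fin 3) ℚ)
    (hg : g = X 2 + 3 * (X 0) ^ 2 * X 1 + 3 * X 0 * (X 1) ^ 3 + (X 1) ^ 5)
    (hh : h = X 1 - 6 * (X 0 + (X 1) ^ 2) ^ 2 * g + 8 * (X 0 + (X 1) ^ 2) * g ^ 3
        - C (16 / 5 : ℚ) * g ^ 5) :
    h.totalDegree = 25 := by
  have hX (i : Fin 3) : (X i : MvPolynomial (Fin 3) ℚ).totalDegree ≤ 1 := (totalDegree_X i).le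
  have hs : (X 0 + X 1 ^ 2 : MvPolynomial (Fin 3) ℚ).totalDegree ≤ 2 :=
    totalDegree_add_le_of_le ((hX 0).trans one_le_two) (totalDegree_X_pow 1 2).le
  have hg_le : g.totalDegree ≤ 5 := hg ▸ totalDegree_kuroda_g_le (hX 0) (hX 1) (hX 2)
  refine le_antisymm (hh ▸ totalDegree_kuroda_h_le _ (hX 1) hs hg_le) ?_
  let f : Fin 3 → Polynomial ℚ := ![0, Polynomial.X, 0]
  have himage : aeval f h = Polynomial.X - 6 * Polynomial.X ^ 9 + 8 * Polynomial.X ^ 17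
      - Polynomial.C (16 / 5 : ℚ) * Polynomial.X ^ 25 := by
    subst hh hg
    simp only [map_sub, map_add, map_mul, map_pow, aeval_X, aeval_ofNat, algHom_C,
      Polynomial.algebraMap_eq, f, Matrix.cons_val_zero, Matrix.cons_val_one, Matrix.cons_val]
    ring
  have hdeg : (aeval f h).natDegree = 25 := by
    rw [himage]
    compute_degree!
  calc 25 = (aeval f h).natDegree := hdeg.symm
    _ ≤ h.totalDegree :=
      natDegree_aeval_le_totalDegree h f (fun i => by fin_cases i <;> simp [f])
end

section
/- Let g = z + 3x²y + 3xy³ + y⁵, f₁ = x + y² − g², and h = y − 6(x+y²)²g + 8(x+y²)g³ − (16/5)g⁵ in ℚ[x,y,z]. Then f₁ and h are algebraically independent over ℚ. -/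
/-!
Substituting `x ↦ u - y²`, `z ↦ -(3(u - y²)²y + 3(u - y²)y³ + y⁵)` parametrizes the surface
`g = 0` by `(u, y)`. Under this substitution `g ↦ 0`, so `f₁ ↦ u` and `h ↦ y`: the pair
`(f₁, h)` is sent to two distinct variables, which are algebraically independent, hence so is
`(f₁, h)`.
-/

open MvPolynomial

theorem AlgebraicIndependent.of_algHom_apply_eq_X {ι σ R A : Type*} [CommRing R] [CommRing A]
    [Algebra R A] {x : ι → A} (φ : A →ₐ[R] MvPolynomial σ R) {e : ι → σ}
    (he : Function.Injective e) (hφ : ∀ i, φ (x i) = X (e i)) : AlgebraicIndependent R x := by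
  apply AlgebraicIndependent.of_comp φ
  have hφx : φ ∘ x = X ∘ e := funext hφ
  rw [hφx]
  exact (algebraicIndependent_X σ R).comp e he

noncomputable def surfaceParam : MvPolynomial (Fin 3) ℚ →ₐ[ℚ] MvPolynomial (Fin 3) ℚ :=
  aeval ![X 0 - X 1 ^ 2, X 1,
    -(3 * (X 0 - X 1 ^ 2) ^ 2 * X 1 + 3 * (X 0 - X 1 ^ 2) * X 1 ^ 3 + X 1 ^ 5)]

@[simp]
theorem surfaceParam_X_zero : surfaceParam (X 0) = X 0 - X 1 ^ 2 := by
  simp [surfaceParam]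

@[simp]
theorem surfaceParam_X_one : surfaceParam (X 1) = X 1 := by
  simp [surfaceParam]

@[simp]
theorem surfaceParam_X_two :
    surfaceParam (X 2) =
      -(3 * (X 0 - X 1 ^ 2) ^ 2 * X 1 + 3 * (X 0 - X 1 ^ 2) * X 1 ^ 3 + X 1 ^ 5) := by
  simp [surfaceParam]

theorem f1_h_algebraicallyIndependent
    (g f₁ h : MvPolynomial (Fin 3) ℚ)
    (hg : g = X 2 + 3 * (X 0) ^ 2 * X 1 + 3 * X 0 * (X 1) ^ 3 + (X 1) ^ 5)
    (hf₁ : f₁ = X 0 + (X 1) ^ 2 - g ^ 2)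
    (hh : h = X 1 - 6 * (X 0 + (X 1) ^ 2) ^ 2 * g + 8 * (X 0 + (X 1) ^ 2) * g ^ 3
        - C (16 / 5 : ℚ) * g ^ 5) :
    AlgebraicIndependent ℚ ![f₁, h] := by
  have hg_zero : surfaceParam g = 0 := by
    rw [hg]
    simp only [map_add, map_mul, map_pow, map_ofNat, surfaceParam_X_zero, surfaceParam_X_one,
      surfaceParam_X_two]
    ring
  refine AlgebraicIndependent.of_algHom_apply_eq_X surfaceParam
    (Fin.castSucc_injective 2) fun i => ?_
  fin_cases i
  · simp [hf₁, hg_zero]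
  · simp [hh, hg_zero]
end
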